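/- arXiv:2212.13609 — 4 statements merged into one kernel-verified Lean document; each statement's English description precedes it below -/
import Mathlib

section
/- Let X be a finite set of cardinality n, let m ≥ 1 divide n, and let F be a nonempty family of m-element subsets of X. Then there exists a partition of X into m parts X_1, …, X_m, each of cardinality n/m, such that the number of U ∈ F with |U ∩ X_i| = 1 for every i ∈ {1, …, m} is at least (n/m)^m · |F| / C(n,m), which in turn is strictly greater than |F| · e^{−m}. -/
/-!
Average over all bijections `σ : Fin m × Fin (n / m) ≃ X`, each of which splits `X` into the
strips `σ({i} × Fin (n / m))`. A set `U ⊆ X` of size `m` is a transversal of this split iff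
`σ⁻¹ U` is the graph of a function `Fin m → Fin (n / m)`, and each of these `(n / m) ^ m`
graphs is carried onto `U` by exactly `m! (n - m)!` bijections. So every `U ∈ F` is a
transversal for the fraction `(n / m) ^ m m! (n - m)! / n! = (n / m) ^ m / C(n, m)` of all
bijections, and some split does at least as well as the average. Finally
`C(n, m) ≤ n ^ m / m! < (n / m) ^ m e ^ m`.
-/

open Finset
open scoped Nat

theorem forall_card_filter_eq_one_iff {ι κ : Type*} [Fintype κ] (R : ι → κ → Prop)
    [∀ i, DecidablePred (R i)] :
    (∀ i, #{j | R i j} = 1) ↔ ∃ f : ι → κ, ∀ i j, j = f i ↔ R i j := by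
  simp only [card_eq_one, Finset.ext_iff, mem_filter, mem_univ, true_and, mem_singleton,
    @iff_comm (_ = _)]
  exact Classical.skolem

theorem card_filter_equiv_respecting {A B : Type*} [Fintype A] [Fintype B] [DecidableEq A]
    [DecidableEq B] (p : A → Prop) (q : B → Prop) [DecidablePred p] [DecidablePred q]
    (e₁ : {a // p a} ≃ {b // q b}) (e₂ : {a // ¬p a} ≃ {b // ¬q b}) :
    #{σ : A ≃ B | ∀ a, p a ↔ q (σ a)} =
      (Fintype.card {a // p a})! * (Fintype.card {a // ¬p a})! := by
  rw [← Fintype.card_subtype, ← Fintype.card_equiv e₁, ← Fintype.card_equiv e₂,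
    ← Fintype.card_prod]
  exact Fintype.card_congr
    { toFun σ := (σ.1.subtypeEquiv σ.2, σ.1.subtypeEquiv fun a => not_congr (σ.2 a))
      invFun e := ⟨(Equiv.sumCompl p).symm.trans ((e.1.sumCongr e.2).trans (Equiv.sumCompl q)),
        fun a => by by_cases h : p a <;> simp [h, Subtype.prop, (e.2 _).prop]⟩
      left_inv σ := by ext a; by_cases h : p a <;> simp [h]
      right_inv e := by ext ⟨a, h⟩ <;> simp [h] }

section Strips

variable {α ι κ : Type*} {X : Finset α} (σ : ι × κ ≃ X)

theorem injective_coe_apply_mk (i : ι) : Function.Injective fun j => (σ (i, j) : α) :=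
  fun j j' h => by simpa using σ.injective (Subtype.ext h)

variable [DecidableEq α] [Fintype κ]

def strip (i : ι) : Finset α := univ.image fun j => (σ (i, j) : α)

theorem card_strip (i : ι) : #(strip σ i) = Fintype.card κ := by
  rw [strip, card_image_of_injective _ (injective_coe_apply_mk σ i), card_univ]

theorem disjoint_strip {i i' : ι} (h : i ≠ i') : Disjoint (strip σ i) (strip σ i') := by
  simp only [strip, disjoint_left, mem_image, mem_univ, true_and]
  rintro _ ⟨j, rfl⟩ ⟨j', hj'⟩
  exact h (congrArg Prod.fst (σ.injective (Subtype.ext hj'))).symm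

theorem biUnion_strip [Fintype ι] : univ.biUnion (strip σ) = X := by
  ext x
  simp only [strip, mem_biUnion, mem_image, mem_univ, true_and]
  refine ⟨fun ⟨i, j, hx⟩ => hx ▸ (σ (i, j)).2, fun hx => ?_⟩
  obtain ⟨⟨i, j⟩, h⟩ := σ.surjective ⟨x, hx⟩
  exact ⟨i, j, by rw [h]⟩

theorem card_inter_strip (U : Finset α) (i : ι) :
    #(U ∩ strip σ i) = #{j | (σ (i, j) : α) ∈ U} := by
  rw [inter_comm, ← filter_mem_eq_inter, strip, filter_image,
    card_image_of_injective _ (injective_coe_apply_mk σ i)]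

theorem card_filter_forall_card_inter_strip_eq_one [Fintype ι] [DecidableEq ι] [DecidableEq κ]
    {U : Finset α} (hU : U ⊆ X) (hUcard : #U = Fintype.card ι)
    (hX : #X = Fintype.card ι * Fintype.card κ) :
    #{σ : ι × κ ≃ X | ∀ i, #(U ∩ strip σ i) = 1} =
      Fintype.card κ ^ Fintype.card ι * ((Fintype.card ι)! * (#X - Fintype.card ι)!) := by
  have hunion : ({σ : ι × κ ≃ X | ∀ i, #(U ∩ strip σ i) = 1} : Finset _) =
      univ.biUnion fun f : ι → κ => {σ | ∀ p, p.2 = f p.1 ↔ (σ p : α) ∈ U} := by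
    ext σ
    simp only [mem_filter, mem_univ, true_and, mem_biUnion, card_inter_strip,
      forall_card_filter_eq_one_iff, Prod.forall]
  have hdisj : ((univ : Finset (ι → κ)) : Set (ι → κ)).PairwiseDisjoint
      fun f => ({σ : ι × κ ≃ X | ∀ p, p.2 = f p.1 ↔ (σ p : α) ∈ U} : Finset _) := by
    intro f _ f' _ hff'
    refine disjoint_filter.2 fun σ _ h h' => hff' (funext fun i => ?_)
    exact (h' (i, f i)).2 ((h (i, f i)).1 rfl)
  have hfiber (f : ι → κ) :
      #{σ : ι × κ ≃ X | ∀ p, p.2 = f p.1 ↔ (σ p : α) ∈ U} =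
        (Fintype.card ι)! * (#X - Fintype.card ι)! := by
    have hgraph : Fintype.card {p : ι × κ // p.2 = f p.1} = Fintype.card ι :=
      Fintype.card_congr ⟨fun p => p.1.1, fun i => ⟨(i, f i), rfl⟩,
        fun p => Subtype.ext (Prod.ext rfl p.2.symm), fun _ => rfl⟩
    have hU' : Fintype.card {x : X // (x : α) ∈ U} = #U := by
      rw [Fintype.card_congr (Equiv.subtypeSubtypeEquivSubtype fun h => hU h), Fintype.card_coe]
    have hcompl := Fintype.card_subtype_compl (fun p : ι × κ => p.2 = f p.1)
    have hcompl' := Fintype.card_subtype_compl (fun x : X => (x : α) ∈ U)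
    have e₁ : {p : ι × κ // p.2 = f p.1} ≃ {x : X // (x : α) ∈ U} :=
      Fintype.equivOfCardEq (by rw [hgraph, hU', hUcard])
    have e₂ : {p : ι × κ // ¬p.2 = f p.1} ≃ {x : X // (x : α) ∉ U} :=
      Fintype.equivOfCardEq (by
        rw [hcompl, hcompl', hgraph, hU', hUcard, Fintype.card_prod, Fintype.card_coe, hX])
    rw [card_filter_equiv_respecting _ _ e₁ e₂, hcompl, hgraph, Fintype.card_prod, hX]
  rw [hunion, card_biUnion hdisj, sum_congr rfl fun f _ => hfiber f, sum_const, card_univ,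
    Fintype.card_fun, smul_eq_mul]

end Strips

theorem exists_le_card_filter_of_card_filter_eq {S β : Type*} [Fintype S] [Nonempty S]
    (F : Finset β) (r : S → β → Prop) [∀ s, DecidablePred (r s)] {c : ℕ}
    (hc : ∀ U ∈ F, #{s | r s U} = c) :
    ∃ s, (#F * c : ℝ) / Fintype.card S ≤ #(F.filter (r s)) := by
  have hsum : ∑ s, #(F.filter (r s)) = #F * c :=
    calc ∑ s, #(F.filter (r s)) = ∑ U ∈ F, #{s | r s U} :=
          sum_card_bipartiteAbove_eq_sum_card_bipartiteBelow _
      _ = #F * c := by rw [sum_congr rfl hc, sum_const, smul_eq_mul]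
  have hle : ∑ _ : S, (#F * c : ℝ) / Fintype.card S ≤ ∑ s, (#(F.filter (r s)) : ℝ) := by
    rw [sum_const, card_univ, nsmul_eq_mul, mul_div_cancel₀ _ (by positivity)]
    exact_mod_cast hsum.ge
  obtain ⟨s, -, hs⟩ := exists_le_of_sum_le univ_nonempty hle
  exact ⟨s, hs⟩

theorem Real.pow_div_factorial_lt_exp {x : ℝ} (hx : 0 < x) (n : ℕ) :
    x ^ n / n ! < Real.exp x := by
  have hsum := Real.sum_le_exp_of_nonneg hx.le (n + 2)
  rw [sum_range_succ, sum_range_succ] at hsum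
  have : 0 ≤ ∑ i ∈ range n, x ^ i / i ! := sum_nonneg fun _ _ => by positivity
  have : 0 < x ^ (n + 1) / (n + 1)! := by positivity
  linarith

theorem choose_mul_lt_pow_mul_exp {m k : ℕ} (hm : 0 < m) (hk : 0 < k) :
    ((m * k).choose m : ℝ) < k ^ m * Real.exp m :=
  calc ((m * k).choose m : ℝ) ≤ ((m * k : ℕ) : ℝ) ^ m / m ! := Nat.choose_le_pow_div m _
    _ = k ^ m * ((m : ℝ) ^ m / m !) := by push_cast; ring
    _ < k ^ m * Real.exp m := by
      gcongr
      exact Real.pow_div_factorial_lt_exp (by positivity) m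

theorem statement_2 {α : Type*} [DecidableEq α] (X : Finset α) (n m : ℕ)
    (hn : X.card = n) (hm : 1 ≤ m) (hdvd : m ∣ n)
    (F : Finset (Finset α)) (hF : F ⊆ X.powersetCard m) (hne : F.Nonempty) :
    ∃ Xs : Fin m → Finset α,
      (∀ i j, i ≠ j → Disjoint (Xs i) (Xs j)) ∧
      Finset.univ.biUnion Xs = X ∧
      (∀ i, (Xs i).card = n / m) ∧
      (((n / m : ℕ) : ℝ) ^ m * F.card / (n.choose m) ≤
        ((F.filter (fun U => ∀ i, (U ∩ Xs i).card = 1)).card : ℝ)) ∧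
      (F.card : ℝ) * Real.exp (-(m : ℝ)) <
        ((n / m : ℕ) : ℝ) ^ m * F.card / (n.choose m) := by
  obtain ⟨U₀, hU₀⟩ := hne
  have hmn : m ≤ n := by
    obtain ⟨hU₀X, hU₀m⟩ := mem_powersetCard.1 (hF hU₀)
    exact hn ▸ hU₀m ▸ card_le_card hU₀X
  have hnk : n = m * (n / m) := (Nat.mul_div_cancel' hdvd).symm
  generalize n / m = k at hnk ⊢
  have hX : #X = Fintype.card (Fin m) * Fintype.card (Fin k) := by simp [hn, hnk]
  have : Nonempty (Fin m × Fin k ≃ X) := ⟨Fintype.equivOfCardEq (by simp [hX])⟩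
  have hcount : ∀ U ∈ F, #{σ : Fin m × Fin k ≃ X | ∀ i, #(U ∩ strip σ i) = 1} =
      k ^ m * (m ! * (n - m)!) := fun U hU => by
    obtain ⟨hUX, hUcard⟩ := mem_powersetCard.1 (hF hU)
    convert card_filter_forall_card_inter_strip_eq_one hUX (by simpa) hX <;> simp [hn]
  obtain ⟨σ, hσ⟩ := exists_le_card_filter_of_card_filter_eq F _ hcount
  have hC : (n.choose m : ℝ) ≠ 0 := by exact_mod_cast (Nat.choose_pos hmn).ne'
  refine ⟨strip σ, fun i j => disjoint_strip σ, biUnion_strip σ,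
    fun i => (card_strip σ i).trans (Fintype.card_fin k), ?_, ?_⟩
  · convert hσ using 1
    rw [Fintype.card_equiv (Classical.arbitrary _), Fintype.card_prod, Fintype.card_fin,
      Fintype.card_fin, ← hnk, ← Nat.choose_mul_factorial_mul_factorial hmn]
    push_cast
    field_simp
  · rw [Real.exp_neg, ← div_eq_mul_inv, div_lt_div_iff₀ (Real.exp_pos _) (by positivity)]
    have hF : (0 : ℝ) < #F := by exact_mod_cast card_pos.2 ⟨U₀, hU₀⟩
    have hk : 0 < k := Nat.pos_of_ne_zero (by rintro rfl; omega)
    have := mul_lt_mul_of_pos_left (choose_mul_lt_pow_mul_exp hm hk) hF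
    rw [← hnk] at this
    linarith
end

section
/- Let m ≥ 1 be an integer, b > 1 a real number, and F a finite family of finite sets each of cardinality at most m with |F| > b^m. Then there exists a finite set S with |S| < m such that b^{|S|} · |F[S]| ≥ |F|, F[S] is nonempty, and for every nonempty finite set T disjoint from S one has b^{|T|} · |F[S ∪ T]| < |F[S]| (that is, F[S] satisfies the Γ(b)-condition relative to extensions of S). -/
/-!
Among the sets `S` with `|F| ≤ b^|S| · |F[S]|` (the empty set is one) take one of maximal size.
Its link `F[S]` is nonempty, so `|S| ≤ m`, and `|S| = m` would force `F[S] ⊆ {S}` and hence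
`|F| ≤ b^m`. If some nonempty `T` disjoint from `S` had `|F[S]| ≤ b^|T| · |F[S ∪ T]|`, then
`S ∪ T` would satisfy the same inequality while being larger than `S`.
-/

open Finset

namespace Finset

theorem nonempty_of_pow_lt_card {α : Type*} {F : Finset α} {b : ℝ} {m : ℕ}
    (hb : 0 ≤ b) (hF : b ^ m < (F.card : ℝ)) : F.Nonempty :=
  card_pos.mp (by exact_mod_cast (pow_nonneg hb m).trans_lt hF)

variable {α : Type*} [DecidableEq α] {b : ℝ} {F : Finset (Finset α)} {S T : Finset α}

def IsDenseLink (b : ℝ) (F : Finset (Finset α)) (S : Finset α) : Prop :=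
  (F.card : ℝ) ≤ b ^ S.card * ((F.filter (fun U => S ⊆ U)).card : ℝ)

theorem isDenseLink_empty : IsDenseLink b F ∅ := by
  simp [IsDenseLink]

theorem IsDenseLink.link_nonempty (hF : F.Nonempty) (h : IsDenseLink b F S) :
    (F.filter (fun U => S ⊆ U)).Nonempty := by
  rw [nonempty_iff_ne_empty]
  intro hempty
  rw [IsDenseLink, hempty, card_empty, Nat.cast_zero, mul_zero, Nat.cast_nonpos] at h
  exact hF.card_pos.ne' h

theorem IsDenseLink.subset_sup (hF : F.Nonempty) (h : IsDenseLink b F S) : S ⊆ F.sup id := by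
  obtain ⟨U, hU⟩ := h.link_nonempty hF
  rw [mem_filter] at hU
  exact hU.2.trans (le_sup (f := id) hU.1)

theorem exists_isDenseLink_card_maximal (hF : F.Nonempty) :
    ∃ S, IsDenseLink b F S ∧ ∀ S', IsDenseLink b F S' → S'.card ≤ S.card := by
  classical
  let C := (F.sup id).powerset.filter (IsDenseLink b F)
  have hC : ∀ S, S ∈ C ↔ IsDenseLink b F S := fun S => by
    simp only [C, mem_filter, mem_powerset, and_iff_right_iff_imp]
    exact IsDenseLink.subset_sup hF
  obtain ⟨S, hS, hmax⟩ := C.exists_max_image card ⟨∅, (hC ∅).2 isDenseLink_empty⟩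
  exact ⟨S, (hC S).1 hS, fun S' hS' => hmax S' ((hC S').2 hS')⟩

theorem link_subset_singleton_of_card_eq {m : ℕ} (hcard : ∀ U ∈ F, U.card ≤ m)
    (hS : S.card = m) : F.filter (fun U => S ⊆ U) ⊆ {S} := by
  intro U hU
  rw [mem_filter] at hU
  rw [mem_singleton, eq_comm]
  exact eq_of_subset_of_card_le hU.2 (hS ▸ hcard U hU.1)

theorem IsDenseLink.card_lt {m : ℕ} (hb : 0 ≤ b) (hcard : ∀ U ∈ F, U.card ≤ m)
    (hF : b ^ m < (F.card : ℝ)) (h : IsDenseLink b F S) : S.card < m := by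
  obtain ⟨U, hU⟩ := h.link_nonempty (nonempty_of_pow_lt_card hb hF)
  rw [mem_filter] at hU
  refine (card_le_card hU.2 |>.trans (hcard U hU.1)).lt_of_ne fun hS => hF.not_ge ?_
  have hlink : ((F.filter (fun U => S ⊆ U)).card : ℝ) ≤ 1 := by
    exact_mod_cast (card_le_card (link_subset_singleton_of_card_eq hcard hS)).trans_eq
      (card_singleton S)
  calc (F.card : ℝ) ≤ b ^ S.card * ((F.filter (fun U => S ⊆ U)).card : ℝ) := h
    _ ≤ b ^ m * 1 := by rw [hS]; gcongr
    _ = b ^ m := mul_one _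

theorem IsDenseLink.union (hb : 0 ≤ b) (h : IsDenseLink b F S) (hST : Disjoint S T)
    (hle : ((F.filter (fun U => S ⊆ U)).card : ℝ) ≤
      b ^ T.card * ((F.filter (fun U => S ∪ T ⊆ U)).card : ℝ)) :
    IsDenseLink b F (S ∪ T) :=
  calc (F.card : ℝ) ≤ b ^ S.card * ((F.filter (fun U => S ⊆ U)).card : ℝ) := h
    _ ≤ b ^ S.card * (b ^ T.card * ((F.filter (fun U => S ∪ T ⊆ U)).card : ℝ)) := by gcongr
    _ = b ^ (S ∪ T).card * ((F.filter (fun U => S ∪ T ⊆ U)).card : ℝ) := by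
      rw [card_union_of_disjoint hST, pow_add, mul_assoc]

end Finset

theorem statement_8_general {α : Type*} [DecidableEq α] (m : ℕ) (b : ℝ) (hb : 1 < b)
    (F : Finset (Finset α)) (hcard : ∀ U ∈ F, U.card ≤ m)
    (hF : b ^ m < (F.card : ℝ)) :
    ∃ S : Finset α, S.card < m ∧
      (F.filter (fun U => S ⊆ U)).Nonempty ∧
      (F.card : ℝ) ≤ b ^ S.card * ((F.filter (fun U => S ⊆ U)).card : ℝ) ∧
      ∀ T : Finset α, T.Nonempty → Disjoint S T →
        b ^ T.card * ((F.filter (fun U => S ∪ T ⊆ U)).card : ℝ) <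
          ((F.filter (fun U => S ⊆ U)).card : ℝ) := by
  have hb0 : 0 ≤ b := zero_le_one.trans hb.le
  have hFne := nonempty_of_pow_lt_card hb0 hF
  obtain ⟨S, hS, hmax⟩ := exists_isDenseLink_card_maximal (b := b) hFne
  refine ⟨S, hS.card_lt hb0 hcard hF, hS.link_nonempty hFne, hS, fun T hT hST => ?_⟩
  by_contra! hle
  have hgrow := hmax _ (hS.union hb0 hST hle)
  rw [card_union_of_disjoint hST] at hgrow
  exact hT.card_pos.ne' (by omega)

theorem statement_8 {α : Type*} [DecidableEq α] (m : ℕ) (hm : 1 ≤ m) (b : ℝ) (hb : 1 < b)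
    (F : Finset (Finset α)) (hcard : ∀ U ∈ F, U.card ≤ m)
    (hF : b ^ m < (F.card : ℝ)) :
    ∃ S : Finset α, S.card < m ∧
      (F.filter (fun U => S ⊆ U)).Nonempty ∧
      (F.card : ℝ) ≤ b ^ S.card * ((F.filter (fun U => S ⊆ U)).card : ℝ) ∧
      ∀ T : Finset α, T.Nonempty → Disjoint S T →
        b ^ T.card * ((F.filter (fun U => S ∪ T ⊆ U)).card : ℝ) <
          ((F.filter (fun U => S ⊆ U)).card : ℝ) :=
  statement_8_general m b hb F hcard hF
end

section
/- Let k ≥ 1 and m ≥ 1 be integers, and let F be a nonempty finite family of nonempty finite sets, each of cardinality at most m, satisfying the Γ(km)-condition: |F[S]| < (km)^{−|S|} · |F| for every nonempty finite set S. Then F contains k pairwise disjoint sets (hence k distinct sets forming a k-sunflower with empty core). -/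
theorem statement_9 {α : Type*} [DecidableEq α] (k m : ℕ) (hk : 1 ≤ k) (hm : 1 ≤ m)
    (F : Finset (Finset α)) (hne : F.Nonempty) (hUne : ∀ U ∈ F, U.Nonempty)
    (hcard : ∀ U ∈ F, U.card ≤ m)
    (hGamma : ∀ S : Finset α, S.Nonempty →
      ((F.filter (fun U => S ⊆ U)).card : ℝ) <
        ((k * m : ℕ) : ℝ) ^ (-(S.card : ℤ)) * F.card) :
    ∃ S ⊆ F, S.card = k ∧ ∀ A ∈ S, ∀ B ∈ S, A ≠ B → Disjoint A B := by
  classical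
  have hF0 : (0 : ℝ) < F.card := by exact_mod_cast Finset.card_pos.mpr hne
  have hkm : (0 : ℝ) < ((k * m : ℕ) : ℝ) := by
    have : 1 ≤ k * m := Nat.one_le_iff_ne_zero.mpr (by positivity)
    exact_mod_cast Nat.lt_of_lt_of_le Nat.zero_lt_one this
  have key : ∀ j : ℕ, j ≤ k → ∃ S ⊆ F, S.card = j ∧
      ∀ A ∈ S, ∀ B ∈ S, A ≠ B → Disjoint A B := by
    intro j
    induction j with
    | zero => intro _; exact ⟨∅, by simp, by simp, by simp⟩
    | succ j ih =>
      intro hj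
      obtain ⟨S, hSF, hScard, hSdisj⟩ := ih (le_of_lt (Nat.lt_of_succ_le hj))
      set W : Finset α := S.biUnion id with hWdef
      have hWcard : W.card ≤ j * m := by
        calc W.card ≤ ∑ A ∈ S, (id A).card := Finset.card_biUnion_le
          _ ≤ ∑ _A ∈ S, m := Finset.sum_le_sum (fun A hA => hcard A (hSF hA))
          _ = j * m := by simp [hScard]
      have hWkm : (W.card : ℝ) ≤ ((k * m : ℕ) : ℝ) := by
        have : W.card ≤ k * m := le_trans hWcard
          (Nat.mul_le_mul_right m (le_trans (Nat.le_succ j) hj))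
        exact_mod_cast this
      have hsub : F.filter (fun U => ¬ Disjoint U W) ⊆
          W.biUnion (fun x => F.filter (fun U => x ∈ U)) := by
        intro U hU
        simp only [Finset.mem_filter] at hU
        obtain ⟨x, hxU, hxW⟩ := Finset.not_disjoint_iff.mp hU.2
        exact Finset.mem_biUnion.mpr ⟨x, hxW, Finset.mem_filter.mpr ⟨hU.1, hxU⟩⟩
      have hcount : ((F.filter (fun U => ¬ Disjoint U W)).card : ℝ) < F.card := by
        by_cases hWne : W.Nonempty
        · have h1 : ((F.filter (fun U => ¬ Disjoint U W)).card : ℝ)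
              ≤ ∑ x ∈ W, ((F.filter (fun U => x ∈ U)).card : ℝ) := by
            have := le_trans (Finset.card_le_card hsub) Finset.card_biUnion_le
            exact_mod_cast this
          have h2 : ∀ x ∈ W, ((F.filter (fun U => x ∈ U)).card : ℝ)
              < ((k * m : ℕ) : ℝ)⁻¹ * F.card := by
            intro x _
            have h := hGamma {x} (Finset.singleton_nonempty x)
            simpa [Finset.singleton_subset_iff, zpow_neg, zpow_one] using h
          have h3 : (∑ x ∈ W, ((F.filter (fun U => x ∈ U)).card : ℝ))
              < ∑ _x ∈ W, ((k * m : ℕ) : ℝ)⁻¹ * F.card :=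
            Finset.sum_lt_sum_of_nonempty hWne h2
          have h4 : (∑ _x ∈ W, ((k * m : ℕ) : ℝ)⁻¹ * (F.card : ℝ))
              ≤ (F.card : ℝ) := by
            rw [Finset.sum_const, nsmul_eq_mul]
            calc (W.card : ℝ) * (((k * m : ℕ) : ℝ)⁻¹ * F.card)
                ≤ ((k * m : ℕ) : ℝ) * (((k * m : ℕ) : ℝ)⁻¹ * F.card) := by
                  apply mul_le_mul_of_nonneg_right hWkm
                  positivity
              _ = F.card := by field_simp
          exact lt_of_le_of_lt h1 (lt_of_lt_of_le h3 h4)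
        · rw [Finset.not_nonempty_iff_eq_empty] at hWne
          simp [hWne, hF0]
      obtain ⟨A, hAF, hAdisj⟩ : ∃ A ∈ F, Disjoint A W := by
        by_contra h
        push_neg at h
        have : F.filter (fun U => ¬ Disjoint U W) = F :=
          Finset.filter_eq_self.mpr (fun U hU => h U hU)
        rw [this] at hcount
        exact lt_irrefl _ hcount
      have hAnotS : A ∉ S := by
        intro hAS
        have hAW : A ⊆ W := Finset.subset_biUnion_of_mem id hAS
        have : Disjoint A A := hAdisj.mono_right hAW
        exact (hUne A hAF).ne_empty ((Finset.disjoint_self_iff_empty A).mp this)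
      refine ⟨insert A S, ?_, ?_, ?_⟩
      · exact Finset.insert_subset hAF hSF
      · rw [Finset.card_insert_of_notMem hAnotS, hScard]
      · intro X hX Y hY hXY
        rcases Finset.mem_insert.mp hX with rfl | hXS
        · rcases Finset.mem_insert.mp hY with rfl | hYS
          · exact absurd rfl hXY
          · exact hAdisj.mono_right (Finset.subset_biUnion_of_mem id hYS)
        · rcases Finset.mem_insert.mp hY with rfl | hYS
          · exact (hAdisj.mono_right (Finset.subset_biUnion_of_mem id hXS)).symm
          · exact hSdisj X hXS Y hYS hXY
  exact key k le_rfl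
end

section
/- Let k ≥ 1 and m ≥ 1 be integers, and let F be a finite family of finite sets, each of cardinality at most m, with |F| > (k·m)^m. Then F contains a k-sunflower. -/
/-- A `k`-sunflower: `k` distinct sets whose pairwise intersections are all equal. -/
def IsSunflower {α : Type*} [DecidableEq α] (k : ℕ) (S : Finset (Finset α)) : Prop :=
  S.card = k ∧ ∃ C : Finset α, ∀ A ∈ S, ∀ B ∈ S, A ≠ B → A ∩ B = C

lemma sunflower_aux {α : Type*} [DecidableEq α] (k : ℕ) (hk : 1 ≤ k) :
    ∀ m (F : Finset (Finset α)), (∀ U ∈ F, U.card ≤ m) → (k * m) ^ m < F.card →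
      ∃ S ⊆ F, IsSunflower k S := by
  intro m
  induction m with
  | zero =>
    intro F hc hF
    exfalso
    have hsub : F ⊆ {∅} := by
      intro U hU
      simp [Finset.card_eq_zero.mp (Nat.le_zero.mp (hc U hU))]
    have := Finset.card_le_card hsub
    simp at this hF
    omega
  | succ n ih =>
    intro F hc hF
    set m := n + 1 with hm
    -- maximal pairwise-disjoint subfamily
    classical
    set 𝒲 : Finset (Finset (Finset α)) :=
      F.powerset.filter (fun W => ∀ A ∈ W, ∀ B ∈ W, A ≠ B → A ∩ B = ∅) with h𝒲
    have hne : 𝒲.Nonempty := ⟨∅, by simp [h𝒲]⟩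
    obtain ⟨W, hWmem, hWmax⟩ := Finset.exists_max_image 𝒲 Finset.card hne
    rw [h𝒲, Finset.mem_filter, Finset.mem_powerset] at hWmem
    obtain ⟨hWF, hWdisj⟩ := hWmem
    by_cases hkW : k ≤ W.card
    · obtain ⟨S, hSW, hScard⟩ := Finset.exists_subset_card_eq hkW
      exact ⟨S, hSW.trans hWF, hScard, ∅, fun A hA B hB hAB =>
        hWdisj A (hSW hA) B (hSW hB) hAB⟩
    · push_neg at hkW
      have hWk : W.card ≤ k - 1 := by omega
      set Y : Finset α := W.biUnion id with hY
      have hYcard : Y.card ≤ (k - 1) * m := by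
        calc Y.card ≤ ∑ B ∈ W, B.card := Finset.card_biUnion_le
          _ ≤ W.card * m := Finset.sum_le_card_nsmul W _ m (fun B hB => hc B (hWF hB))
          _ ≤ (k - 1) * m := Nat.mul_le_mul_right m hWk
      set F' : Finset (Finset α) := F.erase ∅ with hF'
      have hF'card : (k * m) ^ m ≤ F'.card := by
        rw [hF']
        have := Finset.pred_card_le_card_erase (s := F) (a := ∅)
        omega
      have hmeet : ∀ A ∈ F', (A ∩ Y).Nonempty := by
        intro A hA
        have hAF : A ∈ F := Finset.mem_of_mem_erase hA
        have hAne : A ≠ ∅ := Finset.ne_of_mem_erase hA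
        by_cases hAW : A ∈ W
        · obtain ⟨a, ha⟩ := Finset.nonempty_iff_ne_empty.mpr hAne
          exact ⟨a, Finset.mem_inter.mpr ⟨ha, Finset.mem_biUnion.mpr ⟨A, hAW, ha⟩⟩⟩
        · by_contra hcon
          rw [Finset.not_nonempty_iff_eq_empty] at hcon
          -- A is disjoint from every member of W, contradicting maximality
          have hdisjA : ∀ B ∈ W, A ∩ B = ∅ := by
            intro B hB
            apply Finset.eq_empty_of_forall_notMem
            intro a ha
            rw [Finset.mem_inter] at ha
            have : a ∈ A ∩ Y := Finset.mem_inter.mpr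
              ⟨ha.1, Finset.mem_biUnion.mpr ⟨B, hB, ha.2⟩⟩
            simp [hcon] at this
          have hins : insert A W ∈ 𝒲 := by
            rw [h𝒲, Finset.mem_filter, Finset.mem_powerset]
            constructor
            · exact Finset.insert_subset hAF hWF
            · intro X hX Z hZ hXZ
              rcases Finset.mem_insert.mp hX with hX1 | hX1 <;>
                rcases Finset.mem_insert.mp hZ with hZ1 | hZ1
              · exact absurd (hX1.trans hZ1.symm) hXZ
              · subst hX1; exact hdisjA Z hZ1
              · subst hZ1; rw [Finset.inter_comm]; exact hdisjA X hX1
              · exact hWdisj X hX1 Z hZ1 hXZ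
          have := hWmax _ hins
          rw [Finset.card_insert_of_notMem hAW] at this
          omega
      -- pigeonhole: find a popular element y ∈ Y
      set N : ℕ := (k * n) ^ n with hN
      have hpop : ∃ y ∈ Y, N < (F'.filter (fun A => y ∈ A)).card := by
        by_contra hcon
        push_neg at hcon
        have hsub : F' ⊆ Y.biUnion (fun y => F'.filter (fun A => y ∈ A)) := by
          intro A hA
          obtain ⟨a, ha⟩ := hmeet A hA
          rw [Finset.mem_inter] at ha
          exact Finset.mem_biUnion.mpr ⟨a, ha.2, Finset.mem_filter.mpr ⟨hA, ha.1⟩⟩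
        have h1 : F'.card ≤ Y.card * N := by
          calc F'.card ≤ (Y.biUnion (fun y => F'.filter (fun A => y ∈ A))).card :=
                Finset.card_le_card hsub
            _ ≤ ∑ y ∈ Y, (F'.filter (fun A => y ∈ A)).card := Finset.card_biUnion_le
            _ ≤ Y.card * N := Finset.sum_le_card_nsmul Y _ N hcon
        have h2 : Y.card * N ≤ (k - 1) * m * N := Nat.mul_le_mul_right N hYcard
        have h3 : (k - 1) * m * N < (k * m) ^ m := by
          have hlt : (k - 1) * m < k * m :=
            Nat.mul_lt_mul_of_lt_of_le (by omega) le_rfl (by omega)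
          have hle : N ≤ (k * m) ^ n := Nat.pow_le_pow_left (by nlinarith [hk]) n
          have hNpos : 1 ≤ N := by
            rcases Nat.eq_zero_or_pos n with rfl | hn
            · simp [hN]
            · exact Nat.one_le_iff_ne_zero.mpr (pow_ne_zero n (by positivity))
          calc (k - 1) * m * N < k * m * N :=
                Nat.mul_lt_mul_of_lt_of_le hlt le_rfl hNpos
            _ ≤ k * m * (k * m) ^ n := Nat.mul_le_mul_left _ hle
            _ = (k * m) ^ m := by rw [hm, pow_succ]; ring
        omega
      obtain ⟨y, hyY, hycard⟩ := hpop
      -- pass to the link of y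
      set G : Finset (Finset α) := (F'.filter (fun A => y ∈ A)).image (fun A => A.erase y)
        with hG
      have hinj : Set.InjOn (fun A : Finset α => A.erase y)
          ↑(F'.filter (fun A => y ∈ A)) := by
        intro A hA B hB hAB
        simp only [Finset.coe_filter, Set.mem_setOf_eq] at hA hB
        have hAB' : A.erase y = B.erase y := hAB
        rw [← Finset.insert_erase hA.2, ← Finset.insert_erase hB.2, hAB']
      have hGcard : N < G.card := by
        rw [hG, Finset.card_image_of_injOn hinj]; exact hycard
      have hGsize : ∀ B ∈ G, B.card ≤ n := by
        intro B hB
        rw [hG, Finset.mem_image] at hB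
        obtain ⟨A, hA, rfl⟩ := hB
        rw [Finset.mem_filter] at hA
        rw [Finset.card_erase_of_mem hA.2]
        have := hc A (Finset.mem_of_mem_erase hA.1)
        omega
      obtain ⟨S', hS'G, hS'card, C, hC⟩ := ih G hGsize hGcard
      have hynot : ∀ B ∈ S', y ∉ B := by
        intro B hB
        have := hS'G hB
        rw [hG, Finset.mem_image] at this
        obtain ⟨A, _, rfl⟩ := this
        exact Finset.notMem_erase y A
      refine ⟨S'.image (insert y), ?_, ?_, insert y C, ?_⟩
      · intro A hA
        rw [Finset.mem_image] at hA
        obtain ⟨B, hB, rfl⟩ := hA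
        have := hS'G hB
        rw [hG, Finset.mem_image] at this
        obtain ⟨A', hA', rfl⟩ := this
        rw [Finset.mem_filter] at hA'
        rw [Finset.insert_erase hA'.2]
        exact Finset.mem_of_mem_erase hA'.1
      · rw [Finset.card_image_of_injOn, hS'card]
        intro B hB B' hB' hBB'
        have h1 : y ∉ B := hynot B hB
        have h2 : y ∉ B' := hynot B' hB'
        rw [← Finset.erase_insert h1, ← Finset.erase_insert h2, hBB']
      · intro A hA A' hA' hAA'
        rw [Finset.mem_image] at hA hA'
        obtain ⟨B, hB, rfl⟩ := hA
        obtain ⟨B', hB', rfl⟩ := hA'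
        have hBB' : B ≠ B' := fun h => hAA' (by rw [h])
        have hins : insert y B ∩ insert y B' = insert y (B ∩ B') := by
          ext a
          simp only [Finset.mem_inter, Finset.mem_insert]
          tauto
        rw [hins, hC B hB B' hB' hBB']

theorem statement_10 {α : Type*} [DecidableEq α] (k m : ℕ) (hk : 1 ≤ k) (hm : 1 ≤ m)
    (F : Finset (Finset α)) (hcard : ∀ U ∈ F, U.card ≤ m)
    (hF : (k * m) ^ m < F.card) :
    ∃ S ⊆ F, IsSunflower k S := by
  exact sunflower_aux k hk m F hcard hF
end
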